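/- arXiv:0910.4857 — 2 statements merged into one kernel-verified Lean document; each statement's English description precedes it below -/
import Mathlib

section
/- Let m ≥ 2, let ⟨A|R⟩ be a presentation satisfying the condition C(m), let a ∈ A, and suppose R contains a relation of the form (a, w) or (w, a) with w ≠ a. Let â denote the set of all words w such that w ≠ a and (a, w) ∈ R or (w, a) ∈ R, let B = A∖{a}, and let S = (R ∖ {(a, w), (w, a) : w ∈ A*}) ∪ {(u, v) : u, v ∈ â}. Then: (i) the letter a does not occur in any word of â, so every word of â lies in B*; (ii) ⟨B|S⟩ satisfies the condition C(m); and (iii) the inclusion B* → A* of free monoids induces an isomorphism from the monoid presented by ⟨B|S⟩ onto the monoid presented by ⟨A|R⟩. -/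
open FreeMonoid

/-- The congruence on the free monoid generated by a presentation `R`. -/
def presCon {A : Type*} (R : Set (FreeMonoid A × FreeMonoid A)) : Con (FreeMonoid A) :=
  conGen fun u v => (u, v) ∈ R

/-- `w` is a relation word of the presentation `R`. -/
def IsRelWord {A : Type*} (R : Set (FreeMonoid A × FreeMonoid A)) (w : FreeMonoid A) : Prop :=
  ∃ p ∈ R, p.1 = w ∨ p.2 = w

/-- `u` is a factor of `w`. -/
def IsFactor {A : Type*} (u w : FreeMonoid A) : Prop := ∃ p q, w = p * u * q

/-- `u` is a piece of the presentation `R`: it is empty, or occurs as a factor of two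
distinct relation words, or in two different (possibly overlapping) positions within
one relation word. -/
def IsPiece {A : Type*} (R : Set (FreeMonoid A × FreeMonoid A)) (u : FreeMonoid A) : Prop :=
  u = 1 ∨
  (∃ w₁ w₂, IsRelWord R w₁ ∧ IsRelWord R w₂ ∧ w₁ ≠ w₂ ∧ IsFactor u w₁ ∧ IsFactor u w₂) ∨
  (∃ w, IsRelWord R w ∧ ∃ p q p' q', w = p * u * q ∧ w = p' * u * q' ∧ p ≠ p')

/-- The small overlap condition `C(m)`: no relation word is a product of strictly fewer
than `m` pieces. -/
def SmallOverlapC {A : Type*} (R : Set (FreeMonoid A × FreeMonoid A)) (m : ℕ) : Prop :=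
  ∀ w, IsRelWord R w → ∀ l : List (FreeMonoid A),
    (∀ x ∈ l, IsPiece R x) → l.prod = w → m ≤ l.length

/-- The set `â` of words `w ≠ a` appearing opposite the one-letter relation word `a`. -/
def hatSet {A : Type*} (R : Set (FreeMonoid A × FreeMonoid A)) (a : A) :
    Set (FreeMonoid A) :=
  {w | w ≠ of a ∧ ((of a, w) ∈ R ∨ (w, of a) ∈ R)}

/-- The presentation `S = (R ∖ {(a,w),(w,a) : w}) ∪ (â × â)` over the alphabet
`B = A ∖ {a}`, obtained by pulling back along the inclusion `B* → A*`. -/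
def delGenRel {A : Type*} (R : Set (FreeMonoid A × FreeMonoid A)) (a : A) :
    Set (FreeMonoid {b : A // b ≠ a} × FreeMonoid {b : A // b ≠ a}) :=
  {p | (((FreeMonoid.map Subtype.val) p.1, (FreeMonoid.map Subtype.val) p.2) ∈ R ∧
          (FreeMonoid.map Subtype.val) p.1 ≠ of a ∧
          (FreeMonoid.map Subtype.val) p.2 ≠ of a) ∨
       ((FreeMonoid.map Subtype.val) p.1 ∈ hatSet R a ∧
          (FreeMonoid.map Subtype.val) p.2 ∈ hatSet R a)}

/-!
Under C(2) no relation word is a piece, so a relation word cannot be a proper factor of another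
one; in particular the letter `a`, itself a relation word, occurs in no other relation word.
Choosing `w₀ ∈ â`, the substitution `a ↦ w₀` is then a retraction `A* → B*` of the inclusion which
carries relations of `R` to relations of `S`, while the inclusion carries relations of `S` to
`R`-equivalences; since `w₀ ≡ a`, both maps descend to mutually inverse isomorphisms. C(m)
passes to `S` because the inclusion is injective and maps relation words of `S` to relation
words of `R`, hence pieces to pieces.
-/

section General

variable {A B : Type*}

theorem FreeMonoid.map_injective_of_injective {f : B → A} (hf : Function.Injective f) :
    Function.Injective (FreeMonoid.map f) := fun _ _ h =>
  toList.injective (List.map_injective_iff.2 hf (congrArg toList h))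

theorem isFactor_of_of_mem_toList {a : A} {w : FreeMonoid A} (h : a ∈ w.toList) :
    IsFactor (of a) w := by
  obtain ⟨s, t, hst⟩ := List.append_of_mem h
  exact ⟨ofList s, ofList t, toList.injective (by simp [hst])⟩

theorem IsFactor.map {u w : FreeMonoid B} (f : FreeMonoid B →* FreeMonoid A)
    (h : IsFactor u w) : IsFactor (f u) (f w) := by
  obtain ⟨p, q, rfl⟩ := h
  exact ⟨f p, f q, by simp only [map_mul]⟩

theorem presCon_of_mem {R : Set (FreeMonoid A × FreeMonoid A)} {x y : FreeMonoid A}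
    (h : (x, y) ∈ R) : presCon R x y :=
  ConGen.Rel.of _ _ h

theorem presCon_le_ker {M : Type*} [Monoid M] {R : Set (FreeMonoid A × FreeMonoid A)}
    (f : FreeMonoid A →* M) (h : ∀ p ∈ R, f p.1 = f p.2) : presCon R ≤ Con.ker f :=
  Con.conGen_le.2 fun _ _ hxy => h _ hxy

theorem Con.exists_mulEquiv_of_inverse {M N : Type*} [Monoid M] [Monoid N] {c : Con M}
    {d : Con N} (f : M →* N) (g : N →* M) (hf : c ≤ Con.ker (d.mk'.comp f))
    (hg : d ≤ Con.ker (c.mk'.comp g)) (hgf : ∀ x, c (g (f x)) x) (hfg : ∀ y, d (f (g y)) y) :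
    ∃ e : c.Quotient ≃* d.Quotient, ∀ x, e (c.mk' x) = d.mk' (f x) :=
  ⟨MonoidHom.toMulEquiv (c.lift _ hf) (d.lift _ hg)
      (Con.hom_ext <| MonoidHom.ext fun x => (Con.eq c).2 (hgf x))
      (Con.hom_ext <| MonoidHom.ext fun y => (Con.eq d).2 (hfg y)),
    fun _ => rfl⟩

end General

section SmallOverlap

variable {A B : Type*} {R : Set (FreeMonoid A × FreeMonoid A)} {m : ℕ}

theorem IsPiece.map {S : Set (FreeMonoid B × FreeMonoid B)} {f : FreeMonoid B →* FreeMonoid A}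
    (hf : Function.Injective f) (hrel : ∀ w, IsRelWord S w → IsRelWord R (f w))
    {u : FreeMonoid B} (hu : IsPiece S u) : IsPiece R (f u) := by
  rcases hu with rfl | ⟨w₁, w₂, h₁, h₂, hne, f₁, f₂⟩ | ⟨w, hw, p, q, p', q', e, e', hpp⟩
  · exact Or.inl (map_one f)
  · exact Or.inr <| Or.inl
      ⟨_, _, hrel _ h₁, hrel _ h₂, hf.ne hne, f₁.map f, f₂.map f⟩
  · exact Or.inr <| Or.inr ⟨_, hrel _ hw, f p, f q, f p', f q',
      by rw [e, map_mul, map_mul], by rw [e', map_mul, map_mul], hf.ne hpp⟩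

theorem SmallOverlapC.comap {S : Set (FreeMonoid B × FreeMonoid B)}
    {f : FreeMonoid B →* FreeMonoid A} (hf : Function.Injective f)
    (hrel : ∀ w, IsRelWord S w → IsRelWord R (f w)) (hC : SmallOverlapC R m) :
    SmallOverlapC S m := by
  intro w hw l hl hprod
  simpa using hC _ (hrel w hw) (l.map f)
    (by simpa using fun x hx => (hl x hx).map hf hrel)
    (by rw [← map_list_prod, hprod])

theorem SmallOverlapC.not_isPiece (hC : SmallOverlapC R m) (hm : 1 < m) {w : FreeMonoid A}
    (hw : IsRelWord R w) : ¬ IsPiece R w := fun hp =>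
  absurd (hC w hw [w] (by simpa using hp) (by simp)) (by simpa using hm)

theorem SmallOverlapC.eq_of_isFactor (hC : SmallOverlapC R m) (hm : 1 < m)
    {u w : FreeMonoid A} (hu : IsRelWord R u) (hw : IsRelWord R w) (h : IsFactor u w) :
    u = w := by
  by_contra hne
  exact hC.not_isPiece hm hu (Or.inr <| Or.inl ⟨u, w, hu, hw, hne, ⟨1, 1, by simp⟩, h⟩)

theorem SmallOverlapC.not_mem_toList (hC : SmallOverlapC R m) (hm : 1 < m) {a : A}
    (ha : IsRelWord R (of a)) {w : FreeMonoid A} (hw : IsRelWord R w) (hne : w ≠ of a) :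
    a ∉ w.toList := fun h =>
  hne (hC.eq_of_isFactor hm ha hw (isFactor_of_of_mem_toList h)).symm

end SmallOverlap

section Elimination

variable {A : Type*} {R : Set (FreeMonoid A × FreeMonoid A)} {a : A}

theorem isRelWord_of_mem_hatSet {w : FreeMonoid A} (hw : w ∈ hatSet R a) : IsRelWord R w := by
  rcases hw.2 with h | h
  exacts [⟨_, h, Or.inr rfl⟩, ⟨_, h, Or.inl rfl⟩]

theorem isRelWord_of_of_mem_hatSet {w : FreeMonoid A} (hw : w ∈ hatSet R a) :
    IsRelWord R (of a) := by
  rcases hw.2 with h | h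
  exacts [⟨_, h, Or.inl rfl⟩, ⟨_, h, Or.inr rfl⟩]

theorem presCon_of_mem_hatSet {w : FreeMonoid A} (hw : w ∈ hatSet R a) :
    presCon R w (of a) := by
  rcases hw.2 with h | h
  exacts [(presCon R).symm (presCon_of_mem h), presCon_of_mem h]

theorem isRelWord_map_val_of_delGenRel {w : FreeMonoid {b : A // b ≠ a}}
    (hw : IsRelWord (delGenRel R a) w) : IsRelWord R (FreeMonoid.map Subtype.val w) := by
  obtain ⟨p, ⟨hp, -, -⟩ | ⟨h₁, h₂⟩, rfl | rfl⟩ := hw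
  exacts [⟨_, hp, Or.inl rfl⟩, ⟨_, hp, Or.inr rfl⟩,
    isRelWord_of_mem_hatSet h₁, isRelWord_of_mem_hatSet h₂]

theorem delGenRel_le_ker :
    presCon (delGenRel R a) ≤ Con.ker ((presCon R).mk'.comp (FreeMonoid.map Subtype.val)) := by
  refine presCon_le_ker _ fun p hp => (Con.eq _).2 ?_
  rcases hp with ⟨hp, -, -⟩ | ⟨h₁, h₂⟩
  · exact presCon_of_mem (R := R) hp
  · exact (presCon R).trans (presCon_of_mem_hatSet h₁) ((presCon R).symm
      (presCon_of_mem_hatSet h₂))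

open Classical in
noncomputable def replaceLetter (a : A) (w' : FreeMonoid {b : A // b ≠ a}) :
    FreeMonoid A →* FreeMonoid {b : A // b ≠ a} :=
  FreeMonoid.lift fun x => if h : x = a then w' else of ⟨x, h⟩

variable (w' : FreeMonoid {b : A // b ≠ a})

theorem replaceLetter_of_self : replaceLetter a w' (of a) = w' :=
  dif_pos rfl

theorem replaceLetter_of_ne {x : A} (h : x ≠ a) : replaceLetter a w' (of x) = of ⟨x, h⟩ :=
  dif_neg h

theorem replaceLetter_map_val (u : FreeMonoid {b : A // b ≠ a}) :
    replaceLetter a w' (FreeMonoid.map Subtype.val u) = u := by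
  induction u using FreeMonoid.inductionOn' with
  | one => simp
  | of_mul b v ih => rw [map_mul, map_of, map_mul, replaceLetter_of_ne w' b.2, ih]

theorem map_val_replaceLetter {w : FreeMonoid A} (hw : a ∉ w.toList) :
    FreeMonoid.map Subtype.val (replaceLetter a w' w) = w := by
  induction w using FreeMonoid.inductionOn' with
  | one => simp
  | of_mul x v ih =>
    simp only [toList_mul, toList_of, List.singleton_append, List.mem_cons, not_or] at hw
    rw [map_mul, replaceLetter_of_ne w' (Ne.symm hw.1), map_mul, map_of, ih hw.2]

theorem map_val_replaceLetter_rel (c : Con (FreeMonoid A))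
    (hw' : c (FreeMonoid.map Subtype.val w') (of a)) (u : FreeMonoid A) :
    c (FreeMonoid.map Subtype.val (replaceLetter a w' u)) u := by
  induction u using FreeMonoid.inductionOn' with
  | one => simpa using c.refl 1
  | of_mul x v ih =>
    rw [map_mul, map_mul]
    refine c.mul ?_ ih
    by_cases hx : x = a
    · rwa [hx, replaceLetter_of_self]
    · rw [replaceLetter_of_ne w' hx, map_of]
      exact c.refl _

variable {w'}

/-- Relations involving `of a` are sent into `â × â`, all others back to themselves. -/
theorem replaceLetter_mem_delGenRel (hR : ∀ w, IsRelWord R w → w ≠ of a → a ∉ w.toList)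
    (hw' : FreeMonoid.map Subtype.val w' ∈ hatSet R a) {u v : FreeMonoid A} (huv : (u, v) ∈ R) :
    (replaceLetter a w' u, replaceLetter a w' v) ∈ delGenRel R a := by
  have hret : ∀ w, IsRelWord R w → w ≠ of a →
      FreeMonoid.map Subtype.val (replaceLetter a w' w) = w := fun w hw hne =>
    map_val_replaceLetter w' (hR w hw hne)
  have hu : IsRelWord R u := ⟨_, huv, Or.inl rfl⟩
  have hv : IsRelWord R v := ⟨_, huv, Or.inr rfl⟩
  by_cases hua : u = of a <;> by_cases hva : v = of a
  · subst hua hva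
    exact Or.inr ⟨by rwa [replaceLetter_of_self], by rwa [replaceLetter_of_self]⟩
  · subst hua
    exact Or.inr ⟨by rwa [replaceLetter_of_self], by rw [hret v hv hva]; exact ⟨hva, Or.inl huv⟩⟩
  · subst hva
    exact Or.inr ⟨by rw [hret u hu hua]; exact ⟨hua, Or.inr huv⟩, by rwa [replaceLetter_of_self]⟩
  · exact Or.inl ⟨by rwa [hret u hu hua, hret v hv hva], by rwa [hret u hu hua],
      by rwa [hret v hv hva]⟩

end Elimination

/-- **Elimination of a redundant generator from a C(m) presentation** (`m ≥ 2`):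
(i) the letter `a` occurs in no word of `â` (hence those words lie in `B*`);
(ii) the presentation `⟨B|S⟩` satisfies C(m); and
(iii) the inclusion of free monoids `B* → A*` induces an isomorphism between the
monoids presented by `⟨B|S⟩` and `⟨A|R⟩`. -/
theorem statement5 {A : Type*} (R : Set (FreeMonoid A × FreeMonoid A)) (m : ℕ)
    (hm : 2 ≤ m) (hC : SmallOverlapC R m) (a : A)
    (ha : ∃ w, w ∈ hatSet R a) :
    (∀ w ∈ hatSet R a, a ∉ FreeMonoid.toList w) ∧
    SmallOverlapC (delGenRel R a) m ∧
    ∃ e : (presCon (delGenRel R a)).Quotient ≃* (presCon R).Quotient,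
      ∀ u : FreeMonoid {b : A // b ≠ a},
        e ((presCon (delGenRel R a)).mk' u) =
          (presCon R).mk' ((FreeMonoid.map Subtype.val) u) := by
  obtain ⟨w₀, hw₀⟩ := ha
  have hR : ∀ w, IsRelWord R w → w ≠ of a → a ∉ w.toList := fun w hw hne =>
    hC.not_mem_toList hm (isRelWord_of_of_mem_hatSet hw₀) hw hne
  have hhat : ∀ w ∈ hatSet R a, a ∉ w.toList := fun w hw =>
    hR w (isRelWord_of_mem_hatSet hw) hw.1
  set w₀' := replaceLetter a 1 w₀
  have hw₀' : FreeMonoid.map Subtype.val w₀' = w₀ := map_val_replaceLetter 1 (hhat w₀ hw₀)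
  refine ⟨hhat, hC.comap (FreeMonoid.map_injective_of_injective Subtype.val_injective)
    (fun _ => isRelWord_map_val_of_delGenRel), ?_⟩
  refine Con.exists_mulEquiv_of_inverse _ (replaceLetter a w₀') delGenRel_le_ker
    (presCon_le_ker _ fun p hp => (Con.eq _).2 <| presCon_of_mem <|
      replaceLetter_mem_delGenRel hR (hw₀' ▸ hw₀) hp)
    (fun u => by rw [replaceLetter_map_val]; exact (presCon _).refl u) ?_
  exact map_val_replaceLetter_rel w₀' _ (hw₀' ▸ presCon_of_mem_hatSet hw₀)
end

section
/- In any monoid M admitting a presentation satisfying the condition C(2), the set of non-identity indecomposable elements of M forms a generating set for M, and this set is contained in every generating set for M. -/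
open FreeMonoid

universe u v

/-!
Under `C(2)` a relation word is nonempty, and it is a factor of a relation word only as the
whole word itself. Hence a rewriting step applied to a letter or to a relation word rewrites
the whole word, so every word equal to a letter `a` is a letter or a relation word. If all of them
are letters, `[a]` is indecomposable by length; otherwise `[a] = [w]` for a relation word `w`, and
each letter `c` of `w` is not a relation word, so no rewriting applies to `c`, its class is `{c}`,
and `[c]` is indecomposable. So the indecomposables generate. Conversely, in any monoid an
indecomposable element lies in every generating set, since it can only be written as a product
of generators with a single non-identity factor.
-/

section Indecomposables

variable {M N : Type*} [Monoid M] [Monoid N]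

variable (M) in
def indecomposables : Set M :=
  {s | s ≠ 1 ∧ ∀ x y : M, x * y = s → x = 1 ∨ y = 1}

theorem indecomposables_subset_of_closure_eq_top {S : Set M} (hS : Submonoid.closure S = ⊤) :
    indecomposables M ⊆ S := by
  intro s hs
  have hmem : s ∈ Submonoid.closure S := hS ▸ Submonoid.mem_top s
  induction hmem using Submonoid.closure_induction with
  | mem x hx => exact hx
  | one => exact absurd rfl hs.1
  | mul x y _ _ hx hy =>
    rcases hs.2 x y rfl with rfl | rfl
    · rw [one_mul] at hs ⊢; exact hy hs
    · rw [mul_one] at hs ⊢; exact hx hs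

theorem MulEquiv.image_indecomposables_subset (e : M ≃* N) :
    e '' indecomposables M ⊆ indecomposables N := by
  rintro _ ⟨s, ⟨hs1, hs⟩, rfl⟩
  refine ⟨by simpa using hs1, fun x y hxy => ?_⟩
  simpa using hs (e.symm x) (e.symm y) (by rw [← map_mul, hxy, e.symm_apply_apply])

theorem MulEquiv.image_indecomposables (e : M ≃* N) :
    e '' indecomposables M = indecomposables N :=
  e.image_indecomposables_subset.antisymm fun s hs =>
    ⟨e.symm s, e.symm.image_indecomposables_subset ⟨s, hs, rfl⟩, e.apply_symm_apply s⟩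

theorem MulEquiv.closure_indecomposables_eq_top (e : M ≃* N)
    (h : Submonoid.closure (indecomposables N) = ⊤) :
    Submonoid.closure (indecomposables M) = ⊤ := by
  rw [← e.symm.image_indecomposables, ← MonoidHom.map_mclosure, h, ← MonoidHom.mrange_eq_map,
    MonoidHom.mrange_eq_top]
  exact e.symm.surjective

end Indecomposables

section Rewriting

variable {M : Type*} [Monoid M]

def RewriteStep (r : M → M → Prop) (x y : M) : Prop :=
  ∃ p q s t, r s t ∧ x = p * s * q ∧ y = p * t * q

variable {r : M → M → Prop}

theorem RewriteStep.mul_mul {a b : M} (h : RewriteStep r a b) (x y : M) :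
    RewriteStep r (x * a * y) (x * b * y) := by
  obtain ⟨p, q, s, t, hst, rfl, rfl⟩ := h
  exact ⟨x * p, q * y, s, t, hst, by simp only [mul_assoc], by simp only [mul_assoc]⟩

theorem eqvGen_rewriteStep_mul_mul {a b : M} (h : Relation.EqvGen (RewriteStep r) a b)
    (x y : M) : Relation.EqvGen (RewriteStep r) (x * a * y) (x * b * y) := by
  induction h with
  | rel u v huv => exact .rel _ _ (huv.mul_mul x y)
  | refl u => exact .refl _
  | symm u v _ ih => exact .symm _ _ ih
  | trans u v w _ _ ih₁ ih₂ => exact .trans _ _ _ ih₁ ih₂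

variable (r) in
def rewriteCon : Con M where
  r := Relation.EqvGen (RewriteStep r)
  iseqv := Relation.EqvGen.is_equivalence _
  mul' {w x y z} h₁ h₂ := by
    have h₁' := eqvGen_rewriteStep_mul_mul h₁ 1 y
    have h₂' := eqvGen_rewriteStep_mul_mul h₂ x 1
    simp only [one_mul, mul_one] at h₁' h₂'
    exact h₁'.trans _ _ _ h₂'

theorem eqvGen_rewriteStep_of_conGen {x y : M} (h : conGen r x y) :
    Relation.EqvGen (RewriteStep r) x y :=
  (Con.conGen_le (c := rewriteCon r)).mpr
    (fun s t hst => .rel _ _ ⟨1, 1, s, t, hst, by simp, by simp⟩) h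

end Rewriting

theorem Relation.EqvGen.iff_of_forall_rel {α : Type*} {r : α → α → Prop} {P : α → Prop}
    (hP : ∀ x y, r x y → (P x ↔ P y)) {x y : α} (h : Relation.EqvGen r x y) : P x ↔ P y := by
  induction h with
  | rel u v huv => exact hP u v huv
  | refl u => exact Iff.rfl
  | symm u v _ ih => exact ih.symm
  | trans u v w _ _ ih₁ ih₂ => exact ih₁.trans ih₂

theorem FreeMonoid.eq_one_of_length_mul_mul_le {α : Type*} {p s q : FreeMonoid α}
    (h : (p * s * q).length ≤ s.length) : p = 1 ∧ q = 1 := by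
  simp only [length_mul] at h
  exact ⟨length_eq_zero.mp (by omega), length_eq_zero.mp (by omega)⟩

theorem FreeMonoid.map_mem_of_forall_isFactor {α N : Type*} [Monoid N] (f : FreeMonoid α →* N)
    (S : Submonoid N) {w : FreeMonoid α} (h : ∀ c, IsFactor (of c) w → f (of c) ∈ S) :
    f w ∈ S := by
  induction w using FreeMonoid.inductionOn' with
  | one => rw [map_one]; exact S.one_mem
  | of_mul c w ih =>
    rw [map_mul]
    refine S.mul_mem (h c ⟨1, w, by simp⟩) (ih fun d ⟨p, q, hw⟩ => h d ⟨of c * p, q, ?_⟩)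
    rw [hw, mul_assoc, mul_assoc, mul_assoc]

theorem Con.coe_of_mem_indecomposables {α : Type*} {c : Con (FreeMonoid α)} {a : α}
    (h : ∀ u, c u (of a) → u.length = 1) :
    ((of a : FreeMonoid α) : c.Quotient) ∈ indecomposables c.Quotient := by
  refine ⟨fun h₁ => ?_, fun x y hxy => ?_⟩
  · have := h 1 ((c.eq).mp (by rw [Con.coe_one, h₁]))
    simp at this
  · induction x, y using Con.induction_on₂ with
    | H p q =>
      have hlen := h _ ((c.eq).mp hxy)
      rw [length_mul] at hlen
      rcases Nat.eq_zero_or_pos p.length with hp | hp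
      · left; rw [length_eq_zero.mp hp, Con.coe_one]
      · right; rw [length_eq_zero.mp (show q.length = 0 by omega), Con.coe_one]

section Presentation

variable {A : Type*} {R : Set (FreeMonoid A × FreeMonoid A)}

theorem eqvGen_rewriteStep_of_presCon {u v : FreeMonoid A} (h : presCon R u v) :
    Relation.EqvGen (RewriteStep fun s t => (s, t) ∈ R) u v :=
  eqvGen_rewriteStep_of_conGen h

theorem eq_of_presCon_of_forall_not_isFactor {u v : FreeMonoid A}
    (hu : ∀ s, IsRelWord R s → ¬IsFactor s u) (h : presCon R u v) : v = u := by
  refine ((eqvGen_rewriteStep_of_presCon h).iff_of_forall_rel (P := (· = u)) ?_).mp rfl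
  rintro _ _ ⟨p, q, s, t, hst, rfl, rfl⟩
  exact iff_of_false (fun hx => hu s ⟨_, hst, .inl rfl⟩ ⟨p, q, hx.symm⟩)
    (fun hy => hu t ⟨_, hst, .inr rfl⟩ ⟨p, q, hy.symm⟩)

theorem SmallOverlapC.ne_one {m : ℕ} (hC : SmallOverlapC R (m + 1)) {w : FreeMonoid A}
    (hw : IsRelWord R w) : w ≠ 1 := by
  rintro rfl
  simpa using hC 1 hw [] (by simp) rfl

theorem SmallOverlapC.eq_one_of_isFactor (hC : SmallOverlapC R 2) {w s p q : FreeMonoid A}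
    (hw : IsRelWord R w) (hs : IsRelWord R s) (h : w = p * s * q) : p = 1 ∧ q = 1 := by
  have hsw : s = w := by
    by_contra hne
    have hpiece : IsPiece R s := .inr (.inl ⟨s, w, hs, hw, hne, ⟨1, 1, by simp⟩, ⟨p, q, h⟩⟩)
    simpa using hC s hs [s] (by simpa using hpiece) (by simp)
  subst hsw
  exact eq_one_of_length_mul_mul_le (le_of_eq (congrArg length h).symm)

theorem SmallOverlapC.eq_one_of_eq_mul_mul (hC : SmallOverlapC R 2)
    {x s p q : FreeMonoid A} (hx : x.length = 1 ∨ IsRelWord R x) (hs : IsRelWord R s)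
    (h : x = p * s * q) : p = 1 ∧ q = 1 := by
  rcases hx with hx | hx
  · refine eq_one_of_length_mul_mul_le (s := s) ?_
    rw [← h, hx, Nat.one_le_iff_ne_zero, Ne, length_eq_zero]
    exact hC.ne_one hs
  · exact hC.eq_one_of_isFactor hx hs h

theorem SmallOverlapC.isRelWord_of_presCon_of (hC : SmallOverlapC R 2) {a : A}
    {w : FreeMonoid A} (h : presCon R (of a) w) (hw : w.length ≠ 1) : IsRelWord R w := by
  have hinv := (eqvGen_rewriteStep_of_presCon h).iff_of_forall_rel
    (P := fun x => x.length = 1 ∨ IsRelWord R x) ?_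
  · exact (hinv.mp (.inl (length_of a))).resolve_left hw
  rintro _ _ ⟨p, q, s, t, hst, rfl, rfl⟩
  have hs : IsRelWord R s := ⟨_, hst, .inl rfl⟩
  have ht : IsRelWord R t := ⟨_, hst, .inr rfl⟩
  constructor
  · intro hx
    obtain ⟨rfl, rfl⟩ := hC.eq_one_of_eq_mul_mul hx hs rfl
    rw [one_mul, mul_one]
    exact .inr ht
  · intro hy
    obtain ⟨rfl, rfl⟩ := hC.eq_one_of_eq_mul_mul hy ht rfl
    rw [one_mul, mul_one]
    exact .inr hs

theorem SmallOverlapC.coe_of_mem_closure_indecomposables (hC : SmallOverlapC R 2) (a : A) :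
    ((of a : FreeMonoid A) : (presCon R).Quotient) ∈
      Submonoid.closure (indecomposables (presCon R).Quotient) := by
  by_cases hshort : ∀ u, presCon R u (of a) → u.length = 1
  · exact Submonoid.subset_closure (Con.coe_of_mem_indecomposables hshort)
  push Not at hshort
  obtain ⟨w, hw, hlen⟩ := hshort
  have hrel : IsRelWord R w := hC.isRelWord_of_presCon_of ((presCon R).symm hw) hlen
  rw [← (presCon R).eq.mpr hw]
  refine FreeMonoid.map_mem_of_forall_isFactor (presCon R).mk' _ fun c ⟨p, q, hc⟩ =>
    Submonoid.subset_closure (Con.coe_of_mem_indecomposables fun u hu => ?_)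
  -- a relation word inside the letter `c` would be `c` itself, a proper factor of `w`
  have hfree : ∀ s, IsRelWord R s → ¬IsFactor s (of c) := by
    rintro s hs ⟨p', q', hcs⟩
    obtain ⟨rfl, rfl⟩ := hC.eq_one_of_eq_mul_mul (.inl (length_of c)) hs hcs
    rw [one_mul, mul_one] at hcs
    obtain ⟨rfl, rfl⟩ := hC.eq_one_of_isFactor hrel hs (hcs ▸ hc)
    simp [hc, length_of] at hlen
  rw [eq_of_presCon_of_forall_not_isFactor hfree ((presCon R).symm hu), length_of]

theorem SmallOverlapC.closure_indecomposables_eq_top (hC : SmallOverlapC R 2) :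
    Submonoid.closure (indecomposables (presCon R).Quotient) = ⊤ := by
  refine (Submonoid.eq_top_iff' _).mpr fun x => ?_
  induction x using Con.induction_on with
  | H w => exact FreeMonoid.map_mem_of_forall_isFactor (presCon R).mk' _ fun c _ =>
      hC.coe_of_mem_closure_indecomposables c

end Presentation

/-- **Corollary.** In any monoid admitting a C(2) presentation, the set of non-identity
indecomposable elements is a generating set which is contained in every generating set. -/
theorem statement6 {M : Type u} [Monoid M]
    (h : ∃ (A : Type v) (R : Set (FreeMonoid A × FreeMonoid A)),
      SmallOverlapC R 2 ∧ Nonempty (M ≃* (presCon R).Quotient)) :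
    Submonoid.closure {s : M | s ≠ 1 ∧ ∀ x y : M, x * y = s → x = 1 ∨ y = 1} = ⊤ ∧
    ∀ S : Set M, Submonoid.closure S = ⊤ →
      {s : M | s ≠ 1 ∧ ∀ x y : M, x * y = s → x = 1 ∨ y = 1} ⊆ S := by
  obtain ⟨A, R, hC, ⟨e⟩⟩ := h
  exact ⟨e.closure_indecomposables_eq_top hC.closure_indecomposables_eq_top,
    fun S hS => indecomposables_subset_of_closure_eq_top hS⟩
end
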